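/- Let V : M → (−∞,+∞] be proper convex and define R(X) = inf_{t ∈ ℝ} (t + V(X − t)), attained at t̄. Then for any X, the subdifferential satisfies ∂R(X) = ∂V(X − t̄) ∩ {p : E[p] = 1}, given that R satisfies translation equivariance R(X + c) = R(X) + c. -/

import Mathlib

open MeasureTheory

/-- The constant function `1` as an element of `L²(μ)`. -/
noncomputable def oneLp {Θ : Type*} [MeasurableSpace Θ] (μ : Measure Θ)
    [IsFiniteMeasure μ] : Lp ℝ 2 μ :=
  MemLp.toLp (fun _ => (1 : ℝ)) (memLp_const 1)

/-- The optimized certainty equivalent `R(X) = inf_t (t + V(X − t))`. -/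
noncomputable def OCE {Θ : Type*} [MeasurableSpace Θ] (μ : Measure Θ)
    [IsFiniteMeasure μ] (V : Lp ℝ 2 μ → EReal) (X : Lp ℝ 2 μ) : EReal :=
  ⨅ t : ℝ, ((t : EReal) + V (X - t • oneLp μ))

/-- `p` is a subgradient of `f` at `Y` (with pairing `⟨p,W⟩ = E[pW]`). -/
def IsSubgradientAt {Θ : Type*} [MeasurableSpace Θ] (μ : Measure Θ)
    (f : Lp ℝ 2 μ → EReal) (Y p : Lp ℝ 2 μ) : Prop :=
  ∀ Z : Lp ℝ 2 μ, ((∫ θ, p θ * (Z θ - Y θ) ∂μ : ℝ) : EReal) + f Y ≤ f Z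

/-!
Test the subgradient inequality of `R` at `X` against each term `t + V(Z - t)` of the infimum
defining `R(Z)` and write `Z = W + t`. Since `R(X) = t̄ + V(Y)` with `Y = X - t̄`, the inequality
becomes `⟨p, W - Y⟩ + V(Y) + (t - t̄)(⟨p, 1⟩ - 1) ≤ V(W)` for all `W` and `t`. At `t = t̄` this is
the subgradient inequality of `V` at `Y`, and at `W = Y` it holds for every `t` iff `⟨p, 1⟩ = 1`.
-/

open scoped InnerProductSpace

theorem EReal.coe_le_coe_add_iff (a b : ℝ) (x : EReal) :
    (a : EReal) ≤ b + x ↔ ((a - b : ℝ) : EReal) ≤ x := by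
  induction x using EReal.rec with
  | bot => simp only [EReal.add_bot, le_bot_iff, EReal.coe_ne_bot]
  | coe x => norm_cast; constructor <;> intro h <;> linarith
  | top => simp

section Subgradient

variable {E : Type*} [NormedAddCommGroup E] [InnerProductSpace ℝ E]

def HasSubgradientAt (f : E → EReal) (p Y : E) : Prop :=
  ∀ Z, ((⟪p, Z - Y⟫_ℝ : ℝ) : EReal) + f Y ≤ f Z

noncomputable def oceAlong (e : E) (V : E → EReal) (X : E) : EReal :=
  ⨅ t : ℝ, (t : EReal) + V (X - t • e)

variable {e : E} {V : E → EReal} {X p : E} {tbar v : ℝ}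

theorem oceAlong_le (X : E) (t : ℝ) : oceAlong e V X ≤ t + V (X - t • e) :=
  iInf_le _ t

theorem hasSubgradientAt_oceAlong_iff_forall
    (hattain : oceAlong e V X = ((tbar + v : ℝ) : EReal)) :
    HasSubgradientAt (oceAlong e V) p X ↔ ∀ W (t : ℝ),
      ((⟪p, W - (X - tbar • e)⟫_ℝ + v + (t - tbar) * (⟪p, e⟫_ℝ - 1) : ℝ) : EReal) ≤ V W := by
  have inner_shift (W : E) (t : ℝ) : ⟪p, W + t • e - X⟫_ℝ + (tbar + v) - t =
      ⟪p, W - (X - tbar • e)⟫_ℝ + v + (t - tbar) * (⟪p, e⟫_ℝ - 1) := by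
    rw [show W + t • e - X = (W - (X - tbar • e)) + (t - tbar) • e by module,
      inner_add_right, inner_smul_right]
    ring
  simp only [HasSubgradientAt, hattain, ← inner_shift, ← EReal.coe_le_coe_add_iff, ← EReal.coe_add]
  constructor
  · intro h W t
    calc _ ≤ oceAlong e V (W + t • e) := h _
      _ ≤ t + V (W + t • e - t • e) := oceAlong_le _ t
      _ = t + V W := by rw [add_sub_cancel_right]
  · intro h Z
    refine le_iInf fun t => ?_
    simpa using h (Z - t • e) t

theorem hasSubgradientAt_oceAlong_iff
    (hattain : oceAlong e V X = (tbar : EReal) + V (X - tbar • e))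
    (hfin : V (X - tbar • e) ≠ ⊤) (hbot : V (X - tbar • e) ≠ ⊥) :
    HasSubgradientAt (oceAlong e V) p X ↔ HasSubgradientAt V p (X - tbar • e) ∧ ⟪p, e⟫_ℝ = 1 := by
  obtain ⟨v, hv⟩ : ∃ v : ℝ, V (X - tbar • e) = v := ⟨_, (EReal.coe_toReal hfin hbot).symm⟩
  rw [hasSubgradientAt_oceAlong_iff_forall (v := v) (by rw [hattain, hv, EReal.coe_add])]
  have hsubV : HasSubgradientAt V p (X - tbar • e) ↔
      ∀ W, ((⟪p, W - (X - tbar • e)⟫_ℝ + v : ℝ) : EReal) ≤ V W := by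
    simp only [HasSubgradientAt, hv, EReal.coe_add]
  rw [hsubV]
  constructor
  · intro h
    refine ⟨fun W => by simpa using h W tbar, ?_⟩
    have at_Y (t : ℝ) : (t - tbar) * (⟪p, e⟫_ℝ - 1) ≤ 0 := by
      have h_Y := h (X - tbar • e) t
      rw [hv, EReal.coe_le_coe_iff, sub_self, inner_zero_right] at h_Y
      linarith
    nlinarith [at_Y (tbar + 1), at_Y (tbar - 1)]
  · rintro ⟨h, he⟩ W t
    simpa [he] using h W

end Subgradient

section L2

variable {Θ : Type*} [MeasurableSpace Θ] {μ : Measure Θ}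

theorem integral_mul_sub_eq_inner (p Z Y : Lp ℝ 2 μ) :
    ∫ θ, p θ * (Z θ - Y θ) ∂μ = ⟪p, Z - Y⟫_ℝ := by
  rw [L2.inner_def]
  refine integral_congr_ae ?_
  filter_upwards [Lp.coeFn_sub Z Y] with θ h
  rw [h, Pi.sub_apply, Real.inner_apply]

theorem isSubgradientAt_iff_hasSubgradientAt (f : Lp ℝ 2 μ → EReal) (Y p : Lp ℝ 2 μ) :
    IsSubgradientAt μ f Y p ↔ HasSubgradientAt f p Y := by
  simp only [IsSubgradientAt, HasSubgradientAt, integral_mul_sub_eq_inner]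

theorem inner_oneLp [IsFiniteMeasure μ] (p : Lp ℝ 2 μ) : ⟪p, oneLp μ⟫_ℝ = ∫ θ, p θ ∂μ := by
  rw [L2.inner_def]
  refine integral_congr_ae ?_
  filter_upwards [MemLp.coeFn_toLp (memLp_const (μ := μ) (1 : ℝ))] with θ h
  rw [oneLp, h, Real.inner_apply, mul_one]

end L2

theorem OCE_subdifferential_general {Θ : Type*} [MeasurableSpace Θ]
    (μ : Measure Θ) [IsProbabilityMeasure μ]
    (V : Lp ℝ 2 μ → EReal)
    (hnobot : ∀ X, V X ≠ ⊥)
    (X : Lp ℝ 2 μ) (tbar : ℝ)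
    (hattain : OCE μ V X = (tbar : EReal) + V (X - tbar • oneLp μ))
    (hfin : V (X - tbar • oneLp μ) ≠ ⊤) :
    ∀ p : Lp ℝ 2 μ,
      IsSubgradientAt μ (OCE μ V) X p ↔
        (IsSubgradientAt μ V (X - tbar • oneLp μ) p ∧ ∫ θ, p θ ∂μ = 1) := by
  intro p
  rw [isSubgradientAt_iff_hasSubgradientAt, isSubgradientAt_iff_hasSubgradientAt, ← inner_oneLp]
  exact hasSubgradientAt_oceAlong_iff hattain hfin (hnobot _)

/-- for the OCE `R(X) = inf_t (t + V(X−t))`, attained at `t̄`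
(with finite value) and translation equivariant, one has
`∂R(X) = ∂V(X − t̄) ∩ {p : E[p] = 1}`. -/
theorem OCE_subdifferential {Θ : Type*} [MeasurableSpace Θ]
    (μ : Measure Θ) [IsProbabilityMeasure μ]
    (V : Lp ℝ 2 μ → EReal)
    (hproper : ∃ X, V X ≠ ⊤) (hnobot : ∀ X, V X ≠ ⊥)
    (hconv : ∀ X Y : Lp ℝ 2 μ, ∀ a b : ℝ, 0 ≤ a → 0 ≤ b → a + b = 1 →
      V (a • X + b • Y) ≤ (a : EReal) * V X + (b : EReal) * V Y)
    (htrans : ∀ (X : Lp ℝ 2 μ) (c : ℝ),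
      OCE μ V (X + c • oneLp μ) = OCE μ V X + (c : EReal))
    (X : Lp ℝ 2 μ) (tbar : ℝ)
    (hattain : OCE μ V X = (tbar : EReal) + V (X - tbar • oneLp μ))
    (hfin : V (X - tbar • oneLp μ) ≠ ⊤) :
    ∀ p : Lp ℝ 2 μ,
      IsSubgradientAt μ (OCE μ V) X p ↔
        (IsSubgradientAt μ V (X - tbar • oneLp μ) p ∧ ∫ θ, p θ ∂μ = 1) :=
  OCE_subdifferential_general μ V hnobot X tbar hattain hfin
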